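/- If X and Y are unsplittable permutation classes, then the inflation class X[Y] is unsplittable. -/

import Mathlib

/-- A permutation of some finite length `n`, as a bijection of `Fin n`. -/
abbrev PPerm : Type := Σ n : ℕ, Equiv.Perm (Fin n)

/-- `Contains π σ` : the pattern `σ` occurs in (is contained in) `π`. -/
def Contains (π σ : PPerm) : Prop :=
  ∃ f : Fin σ.1 → Fin π.1, StrictMono f ∧
    ∀ i j, σ.2 i < σ.2 j ↔ π.2 (f i) < π.2 (f j)

/-- A permutation class: a set of permutations closed downwards under containment. -/
def IsPermClass (C : Set PPerm) : Prop :=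
  ∀ π ∈ C, ∀ σ : PPerm, Contains π σ → σ ∈ C

/-- `σ` is (exactly) the pattern of the set `S` of points of `π`. -/
def PatternOf (π : PPerm) (S : Set (Fin π.1)) (σ : PPerm) : Prop :=
  ∃ f : Fin σ.1 → Fin π.1, StrictMono f ∧ Set.range f = S ∧
    ∀ i j, σ.2 i < σ.2 j ↔ π.2 (f i) < π.2 (f j)

/-- The points of `π` lying in `S` contain an occurrence of `σ`. -/
def ContainsIn (π : PPerm) (S : Set (Fin π.1)) (σ : PPerm) : Prop :=
  ∃ f : Fin σ.1 → Fin π.1, StrictMono f ∧ (∀ i, f i ∈ S) ∧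
    ∀ i j, σ.2 i < σ.2 j ↔ π.2 (f i) < π.2 (f j)

/-- `π` is a merge of `σ` and `τ`: its points split into a part with pattern `σ`
and a part with pattern `τ`. -/
def IsMerge (π σ τ : PPerm) : Prop :=
  ∃ S : Set (Fin π.1), PatternOf π S σ ∧ PatternOf π Sᶜ τ

/-- Merge of two classes. -/
def MergeCl (C D : Set PPerm) : Set PPerm :=
  {π | ∃ σ ∈ C, ∃ τ ∈ D, IsMerge π σ τ}

/-- The empty permutation. -/
def pempty : PPerm := ⟨0, 1⟩

/-- The singleton permutation `1`. -/
def pone : PPerm := ⟨1, 1⟩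

/-- Iterated merge of a list of classes. -/
def MergeAll : List (Set PPerm) → Set PPerm
  | [] => {pempty}
  | [C] => C
  | C :: D :: Cs => MergeCl C (MergeAll (D :: Cs))

/-- A class is splittable if it is contained in the merge of finitely many
of its proper subclasses. -/
def Splittable (C : Set PPerm) : Prop :=
  ∃ Cs : List (Set PPerm), Cs ≠ [] ∧
    (∀ D ∈ Cs, IsPermClass D ∧ D ⊆ C ∧ D ≠ C) ∧ C ⊆ MergeAll Cs

/-- A class is atomic if it is not the union of two proper subclasses. -/
def Atomic (C : Set PPerm) : Prop :=
  ¬ ∃ D E : Set PPerm, IsPermClass D ∧ IsPermClass E ∧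
      D ⊆ C ∧ D ≠ C ∧ E ⊆ C ∧ E ≠ C ∧ C = D ∪ E

/-- Inflation `A[B]` of a class `A` by a class `B`: `π` decomposes into
consecutive nonempty blocks (given by the fibres of the monotone surjection `g`),
the relative order of distinct blocks follows `σ ∈ A`, and each block has its
pattern in `B`. -/
def Inflate (A B : Set PPerm) : Set PPerm :=
  {π | ∃ σ ∈ A, ∃ g : Fin π.1 → Fin σ.1, Monotone g ∧ Function.Surjective g ∧
    (∀ p q, g p ≠ g q → (π.2 p < π.2 q ↔ σ.2 (g p) < σ.2 (g q))) ∧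
    ∀ b : Fin σ.1, ∃ τ ∈ B, PatternOf π {p | g p = b} τ}

/-- Direct sum `σ ⊕ τ`. -/
def psum (σ τ : PPerm) : PPerm :=
  ⟨σ.1 + τ.1, finSumFinEquiv.permCongr (σ.2.sumCongr τ.2)⟩

/-- Skew sum `σ ⊖ τ`. -/
def pskew (σ τ : PPerm) : PPerm :=
  ⟨σ.1 + τ.1,
    finSumFinEquiv.symm.trans ((σ.2.sumCongr τ.2).trans
      ((Equiv.sumComm (Fin σ.1) (Fin τ.1)).trans
        (finSumFinEquiv.trans (finCongr (Nat.add_comm τ.1 σ.1)))))⟩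

/-- Sum-decomposable: a direct sum of two nonempty permutations. -/
def SumDecomp (π : PPerm) : Prop :=
  ∃ σ τ : PPerm, 0 < σ.1 ∧ 0 < τ.1 ∧ π = psum σ τ

/-- Skew-decomposable: a skew sum of two nonempty permutations. -/
def SkewDecomp (π : PPerm) : Prop :=
  ∃ σ τ : PPerm, 0 < σ.1 ∧ 0 < τ.1 ∧ π = pskew σ τ

def SumClosed (C : Set PPerm) : Prop := ∀ σ ∈ C, ∀ τ ∈ C, psum σ τ ∈ C

def SkewClosed (C : Set PPerm) : Prop := ∀ σ ∈ C, ∀ τ ∈ C, pskew σ τ ∈ C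

/-- The class of permutations avoiding the pattern `σ`. -/
def Av (σ : PPerm) : Set PPerm := {π | ¬ Contains π σ}

/-- The basis of a class: minimal permutations not belonging to it. -/
def PBasis (C : Set PPerm) : Set PPerm :=
  {π | π ∉ C ∧ ∀ σ : PPerm, Contains π σ → σ ≠ π → σ ∈ C}

/-- An interval of `π`: a set of points contiguous in positions and in values. -/
def IsInterval (π : PPerm) (S : Set (Fin π.1)) : Prop :=
  (∀ a ∈ S, ∀ b ∈ S, ∀ c, a ≤ c → c ≤ b → c ∈ S) ∧
  (∀ a ∈ S, ∀ b ∈ S, ∀ c, π.2 a ≤ π.2 c → π.2 c ≤ π.2 b → c ∈ S)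

/-- A simple permutation: its only intervals are the subsingletons and the whole. -/
def SimplePerm (π : PPerm) : Prop :=
  ∀ S : Set (Fin π.1), IsInterval π S → S.Subsingleton ∨ S = Set.univ

/-- Build a permutation from a function with an explicit inverse. -/
def mkP {n : ℕ} (f g : Fin n → Fin n)
    (h₁ : ∀ i, g (f i) = i) (h₂ : ∀ i, f (g i) = i) : PPerm :=
  ⟨n, ⟨f, g, h₁, h₂⟩⟩

def p12 : PPerm := ⟨2, 1⟩
def p21 : PPerm := mkP ![1,0] ![1,0] (by decide) (by decide)
def p213 : PPerm := mkP ![1,0,2] ![1,0,2] (by decide) (by decide)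
def p231 : PPerm := mkP ![1,2,0] ![2,0,1] (by decide) (by decide)
def p312 : PPerm := mkP ![2,0,1] ![1,2,0] (by decide) (by decide)
def p1234 : PPerm := ⟨4, 1⟩
def p2143 : PPerm := mkP ![1,0,3,2] ![1,0,3,2] (by decide) (by decide)
def p3412 : PPerm := mkP ![2,3,0,1] ![2,3,0,1] (by decide) (by decide)
def p4321 : PPerm := mkP ![3,2,1,0] ![3,2,1,0] (by decide) (by decide)
def p2413 : PPerm := mkP ![1,3,0,2] ![2,0,3,1] (by decide) (by decide)
def p3142 : PPerm := mkP ![2,0,3,1] ![1,3,0,2] (by decide) (by decide)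

/-- The class `I` of increasing permutations. -/
def IncCl : Set PPerm := Av p21
/-- The class `D` of decreasing permutations. -/
def DecCl : Set PPerm := Av p12
/-- The class `Av(213)`. -/
def Av213 : Set PPerm := Av p213
/-- The class `L = Av(231, 312)` of layered permutations. -/
def Layered : Set PPerm := Av p231 ∩ Av p312
/-- Separable permutations, characterised by avoidance of `2413` and `3142`. -/
def SepA : Set PPerm := Av p2413 ∩ Av p3142
/-- Separable permutations avoiding every element of `F`. -/
def Avs (F : Set PPerm) : Set PPerm := {π ∈ SepA | ∀ τ ∈ F, ¬ Contains π τ}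
/-- The class of separable permutations, defined as the smallest permutation class
containing `1` and closed under direct sums and skew sums. -/
def SepCl : Set PPerm :=
  ⋂₀ {C : Set PPerm | IsPermClass C ∧ pone ∈ C ∧
      ∀ σ ∈ C, ∀ τ ∈ C, psum σ τ ∈ C ∧ pskew σ τ ∈ C}

/-!
An unsplittable class `C` is Ramsey: for all `δ₀, …, δₙ ∈ C` some `π ∈ C` is such that every
`(n+1)`-colouring of `π` contains `δᵢ` in colour `i` for some `i`, since otherwise `C` lies in the
merge of its proper subclasses `C ∩ Av δᵢ`; conversely a Ramsey class admits no splitting.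

The Ramsey property passes to inflations. Write `δᵢ = σᵢ[τᵢ₁, τᵢ₂, …]`, let `σp ∈ X` be Ramsey for
the `σᵢ`, let `τs ∈ Y` contain every `τᵢⱼ` (Ramsey classes have the joint embedding property) and
let `τp ∈ Y` be Ramsey for `τs`. In a colouring of `σp[τp, …, τp]` every block contains `τs` in a
single colour; colouring `σp` by these colours gives a copy of some `σᵢ` all of whose blocks contain
`τs` in colour `i`, and so a copy of `δᵢ` in colour `i`.
-/

open Function Set

def IsOccurrence (σ π : PPerm) (f : Fin σ.1 → Fin π.1) : Prop :=
  StrictMono f ∧ ∀ i j, σ.2 i < σ.2 j ↔ π.2 (f i) < π.2 (f j)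

lemma IsOccurrence.comp {ρ σ π : PPerm} {f : Fin σ.1 → Fin π.1} {g : Fin ρ.1 → Fin σ.1}
    (hf : IsOccurrence σ π f) (hg : IsOccurrence ρ σ g) : IsOccurrence ρ π (f ∘ g) :=
  ⟨hf.1.comp hg.1, fun i j => (hg.2 i j).trans (hf.2 (g i) (g j))⟩

lemma Contains.refl (π : PPerm) : Contains π π :=
  ⟨id, strictMono_id, fun _ _ => Iff.rfl⟩

lemma Contains.trans {π σ τ : PPerm} (hπσ : Contains π σ) (hστ : Contains σ τ) :
    Contains π τ :=
  let ⟨f, hf⟩ := hπσ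
  let ⟨g, hg⟩ := hστ
  ⟨f ∘ g, IsOccurrence.comp hf hg⟩

lemma Contains.len_le {π σ : PPerm} (h : Contains π σ) : σ.1 ≤ π.1 := by
  obtain ⟨f, hf, -⟩ := h
  simpa using Fintype.card_le_of_injective f hf.injective

lemma PatternOf.contains {π ρ : PPerm} {S : Set (Fin π.1)} (h : PatternOf π S ρ) :
    Contains π ρ :=
  let ⟨f, hf, _, ho⟩ := h
  ⟨f, hf, ho⟩

lemma ContainsIn.contains {π σ : PPerm} {S : Set (Fin π.1)} (h : ContainsIn π S σ) :
    Contains π σ :=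
  let ⟨f, hf, _, ho⟩ := h
  ⟨f, hf, ho⟩

lemma containsIn_univ_iff {π σ : PPerm} : ContainsIn π univ σ ↔ Contains π σ :=
  ⟨ContainsIn.contains, fun ⟨f, hf, ho⟩ => ⟨f, hf, fun _ => trivial, ho⟩⟩

lemma ContainsIn.nonempty {π σ : PPerm} {S : Set (Fin π.1)} (h : ContainsIn π S σ)
    (hσ : 0 < σ.1) : S.Nonempty :=
  let ⟨f, _, hfS, _⟩ := h
  ⟨f ⟨0, hσ⟩, hfS _⟩

lemma containsIn_of_len_eq_zero {σ : PPerm} (h : σ.1 = 0) (π : PPerm) (S : Set (Fin π.1)) :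
    ContainsIn π S σ :=
  ⟨fun i => (Fin.cast h i).elim0, fun i => (Fin.cast h i).elim0, fun i => (Fin.cast h i).elim0,
    fun i => (Fin.cast h i).elim0⟩

lemma ContainsIn.map {π π' σ : PPerm} {S : Set (Fin π.1)} {S' : Set (Fin π'.1)}
    {f : Fin π.1 → Fin π'.1} (h : ContainsIn π S σ) (hf : IsOccurrence π π' f)
    (hfS : MapsTo f S S') : ContainsIn π' S' σ := by
  obtain ⟨g, hg, hgS, hgo⟩ := h
  exact ⟨f ∘ g, (hf.comp ⟨hg, hgo⟩).1, fun i => hfS (hgS i), (hf.comp ⟨hg, hgo⟩).2⟩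

lemma ContainsIn.trans {π σ τ : PPerm} {S : Set (Fin π.1)} (h : ContainsIn π S σ)
    (hστ : Contains σ τ) : ContainsIn π S τ := by
  obtain ⟨f, hf, hfS, hfo⟩ := h
  exact (containsIn_univ_iff.2 hστ).map ⟨hf, hfo⟩ fun i _ => hfS i

lemma exists_patternOf (π : PPerm) (S : Set (Fin π.1)) : ∃ ρ, PatternOf π S ρ := by
  classical
  let f := S.toFinset.orderEmbOfFin rfl
  let v : Fin S.toFinset.card → Fin π.1 := fun i => π.2 (f i)
  have hv : Injective v := π.2.injective.comp f.injective
  have hsorted : StrictMono (v ∘ Tuple.sort v) :=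
    (Tuple.monotone_sort v).strictMono_of_injective (hv.comp (Tuple.sort v).injective)
  -- `(Tuple.sort v)⁻¹` ranks the values of `π` on `S`
  refine ⟨⟨_, (Tuple.sort v)⁻¹⟩, f, f.strictMono, by simp [f], fun i j => ?_⟩
  simpa [v] using (hsorted.lt_iff_lt (a := (Tuple.sort v)⁻¹ i) (b := (Tuple.sort v)⁻¹ j)).symm

lemma PatternOf.contains_iff_containsIn {π ρ σ : PPerm} {S : Set (Fin π.1)}
    (hρ : PatternOf π S ρ) : Contains ρ σ ↔ ContainsIn π S σ := by
  obtain ⟨f, hf, rfl, hfo⟩ := hρ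
  constructor
  · exact fun h => (containsIn_univ_iff.2 h).map ⟨hf, hfo⟩ fun i _ => mem_range_self i
  · rintro ⟨g, hg, hgS, hgo⟩
    choose g' hg' using hgS
    refine ⟨g', fun i j hij => hf.lt_iff_lt.1 ?_, fun i j => ?_⟩
    · simpa only [hg'] using hg hij
    · rw [hgo, hfo, hg', hg']

lemma patternOf_image_iff {π π' ρ : PPerm} {f : Fin π'.1 → Fin π.1} (hf : IsOccurrence π' π f)
    (S : Set (Fin π'.1)) : PatternOf π (f '' S) ρ ↔ PatternOf π' S ρ := by
  constructor
  · rintro ⟨g, hg, hgS, hgo⟩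
    choose g' hg' using fun i => image_subset_range f S (hgS ▸ mem_range_self i)
    refine ⟨g', fun i j hij => hf.1.lt_iff_lt.1 ?_, ?_, fun i j => ?_⟩
    · simpa only [hg'] using hg hij
    · apply hf.1.injective.image_injective
      rw [← range_comp, ← hgS]
      exact congrArg range (funext hg')
    · rw [hgo, hf.2, hg', hg']
  · rintro ⟨g, hg, rfl, hgo⟩
    exact ⟨f ∘ g, (hf.comp ⟨hg, hgo⟩).1, range_comp f g, (hf.comp ⟨hg, hgo⟩).2⟩

def IsRamseyClass (C : Set PPerm) : Prop :=
  ∀ (n : ℕ) (δ : Fin (n + 1) → PPerm), (∀ i, δ i ∈ C) →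
    ∃ π ∈ C, ∀ c : Fin π.1 → Fin (n + 1), ∃ i, ContainsIn π {p | c p = i} (δ i)

namespace IsRamseyClass

variable {C : Set PPerm}

lemma exists_contains_contains (hC : IsRamseyClass C) {a b : PPerm} (ha : a ∈ C) (hb : b ∈ C) :
    ∃ d ∈ C, Contains d a ∧ Contains d b := by
  rcases Nat.eq_zero_or_pos a.1 with ha0 | ha0
  · exact ⟨b, hb, (containsIn_of_len_eq_zero ha0 b univ).contains, Contains.refl b⟩
  rcases Nat.eq_zero_or_pos b.1 with hb0 | hb0
  · exact ⟨a, ha, Contains.refl a, (containsIn_of_len_eq_zero hb0 a univ).contains⟩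
  obtain ⟨π, hπ, hcol⟩ := hC 1 ![a, b] (by simp [Fin.forall_fin_two, ha, hb])
  have hpos : ∀ i : Fin 2, 0 < (![a, b] i).1 := by simp [Fin.forall_fin_two, ha0, hb0]
  -- under a constant colouring, only the colour in use can hold a nonempty pattern
  have hconst : ∀ j : Fin 2, Contains π (![a, b] j) := by
    intro j
    obtain ⟨i, hi⟩ := hcol fun _ => j
    obtain ⟨-, rfl⟩ := hi.nonempty (hpos i)
    exact hi.contains
  exact ⟨π, hπ, hconst 0, hconst 1⟩

lemma exists_forall_contains (hC : IsRamseyClass C) (hne : C.Nonempty) {ι : Type*} [Fintype ι]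
    (F : ι → PPerm) (hF : ∀ i, F i ∈ C) : ∃ d ∈ C, ∀ i, Contains d (F i) := by
  classical
  suffices ∀ s : Finset ι, ∃ d ∈ C, ∀ i ∈ s, Contains d (F i) by
    simpa using this Finset.univ
  intro s
  induction s using Finset.induction_on with
  | empty => exact ⟨hne.some, hne.some_mem, by simp⟩
  | insert i s _ ih =>
    obtain ⟨d, hd, hds⟩ := ih
    obtain ⟨e, he, hed, hei⟩ := hC.exists_contains_contains hd (hF i)
    exact ⟨e, he, Finset.forall_mem_insert _ _ _ |>.2 ⟨hei, fun j hj => hed.trans (hds j hj)⟩⟩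

end IsRamseyClass

lemma mergeAll_cons_of_ne_nil (C : Set PPerm) {Cs : List (Set PPerm)} (hCs : Cs ≠ []) :
    MergeAll (C :: Cs) = MergeCl C (MergeAll Cs) := by
  obtain ⟨D, Ds, rfl⟩ := List.exists_cons_of_ne_nil hCs
  rfl

lemma exists_coloring_succ_iff {n : ℕ} {D : Fin (n + 2) → Set PPerm} {π : PPerm} :
    (∃ c : Fin π.1 → Fin (n + 2), ∀ i, ∃ ρ ∈ D i, PatternOf π {p | c p = i} ρ) ↔
      ∃ S : Set (Fin π.1), (∃ ρ ∈ D 0, PatternOf π S ρ) ∧ ∃ π', PatternOf π Sᶜ π' ∧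
        ∃ c : Fin π'.1 → Fin (n + 1), ∀ i, ∃ ρ ∈ D i.succ, PatternOf π' {q | c q = i} ρ := by
  classical
  constructor
  · rintro ⟨c, hc⟩
    obtain ⟨π', f, hf, hfr, hfo⟩ := exists_patternOf π {p | c p = 0}ᶜ
    have hf0 : ∀ q, c (f q) ≠ 0 := fun q => (hfr ▸ mem_range_self q : f q ∈ {p | c p = 0}ᶜ)
    refine ⟨_, hc 0, π', ⟨f, hf, hfr, hfo⟩, fun q => (c (f q)).pred (hf0 q), fun i => ?_⟩
    have himage : f '' {q | (c (f q)).pred (hf0 q) = i} = {p | c p = i.succ} := by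
      ext p
      simp only [mem_image, mem_ofPred_eq, Fin.pred_eq_iff_eq_succ]
      refine ⟨fun ⟨q, hq, hqp⟩ => hqp ▸ hq, fun hp => ?_⟩
      obtain ⟨q, rfl⟩ : p ∈ range f := hfr ▸ fun h => Fin.succ_ne_zero i (hp.symm.trans h)
      exact ⟨q, hp, rfl⟩
    simpa only [← himage, patternOf_image_iff ⟨hf, hfo⟩] using hc i.succ
  · rintro ⟨S, hS, π', ⟨f, hf, hfr, hfo⟩, c, hc⟩
    choose g hg using fun p (hp : p ∉ S) => (hfr ▸ hp : p ∈ range f)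
    let c' : Fin π.1 → Fin (n + 2) := fun p => if hp : p ∈ S then 0 else (c (g p hp)).succ
    refine ⟨c', Fin.cases ?_ fun i => ?_⟩
    · simpa [c', Fin.succ_ne_zero] using hS
    · have himage : f '' {q | c q = i} = {p | c' p = i.succ} := by
        ext p
        by_cases hp : p ∈ S
        · simp only [mem_image, mem_ofPred_eq, c', hp, dif_pos, (Fin.succ_ne_zero i).symm,
            iff_false]
          rintro ⟨q, -, rfl⟩
          exact (hfr ▸ mem_range_self q : f q ∈ Sᶜ) hp
        · obtain ⟨q, rfl⟩ : p ∈ range f := hfr ▸ hp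
          simp [c', hp, hf.injective (hg _ hp), hf.injective.eq_iff]
      simpa only [← himage, patternOf_image_iff ⟨hf, hfo⟩] using hc i

lemma mem_mergeAll_ofFn_iff {n : ℕ} {D : Fin (n + 1) → Set PPerm} (hD : ∀ i, IsPermClass (D i))
    {π : PPerm} : π ∈ MergeAll (List.ofFn D) ↔
      ∃ c : Fin π.1 → Fin (n + 1), ∀ i, ∃ ρ ∈ D i, PatternOf π {p | c p = i} ρ := by
  induction n generalizing π with
  | zero =>
    have huniv : ∀ c : Fin π.1 → Fin 1, {p | c p = 0} = univ := fun c =>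
      eq_univ_of_forall fun p => Fin.fin_one_eq_zero (c p)
    simp only [List.ofFn_succ, List.ofFn_zero, MergeAll]
    refine ⟨fun hπ => ⟨fun _ => 0, fun i => ?_⟩, fun ⟨c, hc⟩ => ?_⟩
    · rw [Fin.fin_one_eq_zero i, huniv]
      exact ⟨π, hπ, id, strictMono_id, range_id, fun _ _ => Iff.rfl⟩
    obtain ⟨ρ, hρ, hpat⟩ := hc 0
    rw [huniv] at hpat
    exact hD 0 ρ hρ π (hpat.contains_iff_containsIn.2 (containsIn_univ_iff.2 (Contains.refl π)))
  | succ n ih =>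
    rw [List.ofFn_succ, mergeAll_cons_of_ne_nil _ (by simp), exists_coloring_succ_iff]
    simp only [MergeCl, IsMerge, mem_ofPred_eq, ih fun i => hD i.succ]
    constructor
    · rintro ⟨ρ, hρ, π', hπ', S, hS, hSc⟩
      exact ⟨S, ⟨ρ, hρ, hS⟩, π', hSc, hπ'⟩
    · rintro ⟨S, ⟨ρ, hρ, hS⟩, π', hSc, hπ'⟩
      exact ⟨ρ, hρ, π', hπ', S, hS, hSc⟩

lemma isPermClass_inter_av {C : Set PPerm} (hC : IsPermClass C) (δ : PPerm) :
    IsPermClass (C ∩ Av δ) := fun π hπ σ hσ =>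
  ⟨hC π hπ.1 σ hσ, fun hδ => hπ.2 (Contains.trans hσ hδ)⟩

lemma isRamseyClass_of_not_splittable {C : Set PPerm} (hC : IsPermClass C)
    (h : ¬ Splittable C) : IsRamseyClass C := by
  intro n δ hδ
  by_contra! hfail
  refine h ⟨List.ofFn fun i => C ∩ Av (δ i), by simp, ?_, fun π hπ => ?_⟩
  · simp only [List.mem_ofFn, forall_exists_index, forall_apply_eq_imp_iff]
    exact fun i => ⟨isPermClass_inter_av hC (δ i), inter_subset_left,
      fun hCi => ((Set.ext_iff.1 hCi (δ i)).2 (hδ i)).2 (Contains.refl _)⟩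
  obtain ⟨c, hc⟩ := hfail π hπ
  refine (mem_mergeAll_ofFn_iff fun i => isPermClass_inter_av hC (δ i)).2 ⟨c, fun i => ?_⟩
  obtain ⟨ρ, hρ⟩ := exists_patternOf π {p | c p = i}
  exact ⟨ρ, ⟨hC π hπ ρ hρ.contains, fun hρδ => hc i (hρ.contains_iff_containsIn.1 hρδ)⟩, hρ⟩

lemma IsRamseyClass.not_splittable {C : Set PPerm} (hC : IsRamseyClass C) : ¬ Splittable C := by
  rintro ⟨_ | ⟨D, Ds⟩, hne, hDs, hcover⟩
  · exact hne rfl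
  have hget : ∀ i, IsPermClass ((D :: Ds).get i) ∧ (D :: Ds).get i ⊆ C ∧ (D :: Ds).get i ≠ C :=
    fun i => hDs _ (List.get_mem _ i)
  choose δ hδC hδ using fun i => exists_of_ssubset ((hget i).2.1.ssubset_of_ne (hget i).2.2)
  obtain ⟨π, hπ, hramsey⟩ := hC Ds.length δ hδC
  rw [← List.ofFn_get (D :: Ds)] at hcover
  obtain ⟨c, hc⟩ := (mem_mergeAll_ofFn_iff fun i => (hget i).1).1 (hcover hπ)
  obtain ⟨i, hi⟩ := hramsey c
  obtain ⟨ρ, hρ, hpat⟩ := hc i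
  exact hδ i ((hget i).1 ρ hρ _ (hpat.contains_iff_containsIn.2 hi))

def IsBlockMap (π σ : PPerm) (g : Fin π.1 → Fin σ.1) : Prop :=
  Monotone g ∧ ∀ p q, g p ≠ g q → (π.2 p < π.2 q ↔ σ.2 (g p) < σ.2 (g q))

lemma containsIn_of_blocks {π σ δ ρ : PPerm} {g : Fin π.1 → Fin σ.1} {h : Fin δ.1 → Fin ρ.1}
    (hg : IsBlockMap π σ g) (hh : IsBlockMap δ ρ h) {e : Fin ρ.1 → Fin σ.1}
    (he : IsOccurrence ρ σ e) {τ : Fin ρ.1 → PPerm} (hτ : ∀ b, PatternOf δ {p | h p = b} (τ b))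
    {S : Set (Fin π.1)} (hS : ∀ b, ContainsIn π (S ∩ {p | g p = e b}) (τ b)) :
    ContainsIn π S δ := by
  choose v hv hvr hvo using hτ
  choose u hu huS huo using hS
  choose r hr using fun b p (hp : h p = b) => (hvr b ▸ hp : p ∈ range (v b))
  let F : Fin δ.1 → Fin π.1 := fun p => u (h p) (r _ p rfl)
  have hF : ∀ b p (hp : h p = b), F p = u b (r b p hp) := by rintro b p rfl; rfl
  have hgF : ∀ p, g (F p) = e (h p) := fun p => (huS _ _).2
  have hsame : ∀ p q, h p = h q →
      (p < q ↔ F p < F q) ∧ (δ.2 p < δ.2 q ↔ π.2 (F p) < π.2 (F q)) := by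
    intro p q hpq
    obtain ⟨b, x, y, rfl, rfl, hx, hy⟩ :
        ∃ b x y, p = v b x ∧ q = v b y ∧ F p = u b x ∧ F q = u b y :=
      ⟨h q, r _ p hpq, r _ q rfl, (hr _ p hpq).symm, (hr _ q rfl).symm, hF _ p hpq, hF _ q rfl⟩
    rw [hx, hy, (hv b).lt_iff_lt, (hu b).lt_iff_lt, ← hvo, ← huo]
    exact ⟨Iff.rfl, Iff.rfl⟩
  have hdiff : ∀ p q, h p ≠ h q → (δ.2 p < δ.2 q ↔ π.2 (F p) < π.2 (F q)) := fun p q hpq => by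
    rw [hh.2 p q hpq, he.2, hg.2 _ _ (by rw [hgF, hgF]; exact he.1.injective.ne hpq), hgF, hgF]
  refine ⟨F, fun p q hpq => ?_, fun p => (huS _ _).1, fun p q => ?_⟩
  · by_cases hpq' : h p = h q
    · exact (hsame p q hpq').1.1 hpq
    · apply hg.1.reflect_lt
      rw [hgF, hgF]
      exact he.1 ((hh.1 hpq.le).lt_of_ne hpq')
  · by_cases hpq : h p = h q
    · exact (hsame p q hpq).2
    · exact hdiff p q hpq

lemma finProdFinEquiv_lt_finProdFinEquiv {m n : ℕ} {x y : Fin m × Fin n} :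
    finProdFinEquiv x < finProdFinEquiv y ↔ x.1 < y.1 ∨ x.1 = y.1 ∧ x.2 < y.2 := by
  have hmono : StrictMono fun x : Fin m ×ₗ Fin n => finProdFinEquiv (ofLex x) := by
    intro x y hlt
    obtain ⟨⟨a, b⟩, rfl⟩ := toLex.surjective x
    obtain ⟨⟨a', b'⟩, rfl⟩ := toLex.surjective y
    rw [Prod.Lex.toLex_lt_toLex] at hlt
    simp only [ofLex_toLex, Fin.lt_def, finProdFinEquiv_apply_val] at hlt ⊢
    rcases hlt with ha | ⟨ha, hb⟩
    · have := Nat.mul_le_mul_left n (Nat.succ_le_of_lt ha)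
      have := b.isLt
      rw [Nat.mul_succ] at *
      omega
    · rw [ha]; exact Nat.add_lt_add_right hb _
  rw [← Prod.Lex.toLex_lt_toLex]
  exact hmono.lt_iff_lt

/-- The inflation `σ[τ, …, τ]`: block `b` occupies the positions `finProdFinEquiv (b, ·)`. -/
abbrev pinflate (σ τ : PPerm) : PPerm :=
  ⟨σ.1 * τ.1, finProdFinEquiv.permCongr (σ.2.prodCongr τ.2)⟩

lemma pinflate_apply (σ τ : PPerm) (b : Fin σ.1) (r : Fin τ.1) :
    (pinflate σ τ).2 (finProdFinEquiv (b, r)) = finProdFinEquiv (σ.2 b, τ.2 r) := by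
  simp [pinflate, Equiv.permCongr_apply]

lemma isBlockMap_pinflate (σ τ : PPerm) :
    IsBlockMap (pinflate σ τ) σ fun p => (finProdFinEquiv.symm p).1 := by
  refine ⟨fun p q hpq => ?_, fun p q hpq => ?_⟩
  all_goals
    obtain ⟨⟨b, r⟩, rfl⟩ := finProdFinEquiv.surjective p
    obtain ⟨⟨b', r'⟩, rfl⟩ := finProdFinEquiv.surjective q
    simp only [Equiv.symm_apply_apply] at hpq ⊢
  · by_contra! hlt
    exact hpq.not_gt (finProdFinEquiv_lt_finProdFinEquiv.2 (Or.inl hlt))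
  · rw [pinflate_apply, pinflate_apply, finProdFinEquiv_lt_finProdFinEquiv]
    simp [σ.2.injective.ne hpq]

lemma isOccurrence_pinflate_block (σ τ : PPerm) (b : Fin σ.1) :
    IsOccurrence τ (pinflate σ τ) fun r => finProdFinEquiv (b, r) := by
  refine ⟨fun r r' hr => ?_, fun r r' => ?_⟩
  · simp [finProdFinEquiv_lt_finProdFinEquiv, hr]
  · simp [finProdFinEquiv_lt_finProdFinEquiv]

lemma pinflate_mem_inflate {X Y : Set PPerm} {σ τ : PPerm} (hσ : σ ∈ X) (hτ : τ ∈ Y)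
    (hτ0 : 0 < τ.1) : pinflate σ τ ∈ Inflate X Y := by
  refine ⟨σ, hσ, _, (isBlockMap_pinflate σ τ).1,
    fun b => ⟨finProdFinEquiv (b, ⟨0, hτ0⟩), by simp⟩, (isBlockMap_pinflate σ τ).2, fun b => ?_⟩
  refine ⟨τ, hτ, _, (isOccurrence_pinflate_block σ τ b).1, ?_,
    (isOccurrence_pinflate_block σ τ b).2⟩
  ext p
  obtain ⟨⟨b', r⟩, rfl⟩ := finProdFinEquiv.surjective p
  simp only [mem_range, mem_ofPred_eq, Equiv.symm_apply_apply, EmbeddingLike.apply_eq_iff_eq,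
    Prod.mk.injEq]
  exact ⟨fun ⟨_, h, _⟩ => h.symm, fun h => ⟨r, h.symm, rfl⟩⟩

lemma len_eq_zero_of_mem_inflate {X Y : Set PPerm} (hY : ∀ τ ∈ Y, τ.1 = 0) {π : PPerm}
    (hπ : π ∈ Inflate X Y) : π.1 = 0 := by
  obtain ⟨σ, -, g, -, -, -, hblocks⟩ := hπ
  by_contra hπ0
  obtain ⟨τ, hτ, f, -, hfr, -⟩ := hblocks (g ⟨0, Nat.pos_of_ne_zero hπ0⟩)
  obtain ⟨q, -⟩ : (⟨0, Nat.pos_of_ne_zero hπ0⟩ : Fin π.1) ∈ range f := hfr ▸ rfl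
  exact absurd (hY τ hτ) (Nat.pos_iff_ne_zero.1 q.pos)

lemma exists_monochromatic_blocks {σp τp τs : PPerm} {n : ℕ} {σ : Fin (n + 1) → PPerm}
    (hσ : ∀ c : Fin σp.1 → Fin (n + 1), ∃ i, ContainsIn σp {b | c b = i} (σ i))
    (hτ : ∀ c : Fin τp.1 → Fin (n + 1), ∃ i, ContainsIn τp {r | c r = i} τs)
    (c : Fin (pinflate σp τp).1 → Fin (n + 1)) :
    ∃ i e, IsOccurrence (σ i) σp e ∧ ∀ b, ContainsIn (pinflate σp τp)
      ({p | c p = i} ∩ {p | (finProdFinEquiv.symm p).1 = e b}) τs := by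
  choose colour hcolour using fun b => hτ fun r => c (finProdFinEquiv (b, r))
  obtain ⟨i, e, he, hei, heo⟩ := hσ colour
  refine ⟨i, e, ⟨he, heo⟩, fun b =>
    (hcolour (e b)).map (isOccurrence_pinflate_block σp τp (e b)) fun r hr => ⟨?_, ?_⟩⟩
  · exact (hei b).symm ▸ hr
  · simp only [mem_ofPred_eq, Equiv.symm_apply_apply]

lemma IsRamseyClass.inflate {X Y : Set PPerm} (hX : IsRamseyClass X) (hY : IsRamseyClass Y) :
    IsRamseyClass (Inflate X Y) := by
  intro n δ hδ
  by_cases hY0 : ∀ τ ∈ Y, τ.1 = 0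
  · exact ⟨δ 0, hδ 0, fun _ =>
      ⟨0, containsIn_of_len_eq_zero (len_eq_zero_of_mem_inflate hY0 (hδ 0)) _ _⟩⟩
  obtain ⟨τ₀, hτ₀Y, hτ₀⟩ : ∃ τ ∈ Y, 0 < τ.1 := by simpa [Nat.pos_iff_ne_zero] using hY0
  choose σ hσX g hgmono _ hgord τ hτY hτ using hδ
  obtain ⟨τs, hτsY, hτs⟩ := hY.exists_forall_contains ⟨τ₀, hτ₀Y⟩
    (fun o : Option (Σ i, Fin (σ i).1) => o.elim τ₀ fun x => τ x.1 x.2)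
    (fun o => o.rec hτ₀Y fun x => hτY x.1 x.2)
  obtain ⟨σp, hσpX, hσp⟩ := hX n σ hσX
  obtain ⟨τp, hτpY, hτp⟩ := hY n (fun _ => τs) fun _ => hτsY
  have hτp₀ : 0 < τp.1 :=
    hτ₀.trans_le ((hτp fun _ => 0).choose_spec.contains.trans (hτs none)).len_le
  refine ⟨pinflate σp τp, pinflate_mem_inflate hσpX hτpY hτp₀, fun c => ?_⟩
  obtain ⟨i, e, he, hblocks⟩ := exists_monochromatic_blocks hσp hτp c
  exact ⟨i, containsIn_of_blocks (isBlockMap_pinflate σp τp) ⟨hgmono i, hgord i⟩ he (hτ i)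
    fun b => (hblocks b).trans (hτs (some ⟨i, b⟩))⟩

/-- If `X` and `Y` are unsplittable classes, then so is `X[Y]`. -/
theorem stmt5 (X Y : Set PPerm) (hX : IsPermClass X) (hY : IsPermClass Y)
    (hX' : ¬ Splittable X) (hY' : ¬ Splittable Y) :
    ¬ Splittable (Inflate X Y) :=
  ((isRamseyClass_of_not_splittable hX hX').inflate
    (isRamseyClass_of_not_splittable hY hY')).not_splittable
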